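/- Let H be a dephased N×N complex Hadamard matrix with defect d(H) = 0. Then no nontrivial affine Hadamard family stems from H: any real vector subspace V of N×N real matrices with vanishing first row and first column such that H ∘ EXP(i·R) is a complex Hadamard matrix for every R ∈ V must be the zero subspace. -/

import Mathlib

/-- A complex Hadamard matrix: all entries of modulus one, and `H * Hᴴ = N • 1`. -/
def IsComplexHadamard {n : Type*} [Fintype n] [DecidableEq n] (H : Matrix n n ℂ) : Prop :=
  (∀ i j, ‖H i j‖ = 1) ∧
    H * H.conjTranspose = (Fintype.card n : ℂ) • (1 : Matrix n n ℂ)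

/-- Dephased w.r.t. the distinguished index `i0`: all entries of the `i0`-th row
and column are equal to `1`. -/
def IsDephased {n : Type*} (H : Matrix n n ℂ) (i0 : n) : Prop :=
  (∀ j, H i0 j = 1) ∧ (∀ i, H i i0 = 1)

/-- The solution space of the real linear system defining the defect of `H`:
`R` has vanishing first row (off the corner) and first column, and
`∑_k H_ik · conj(H_jk) · (R_ik − R_jk) = 0` for all `i < j`. -/
def defectSpace (N : ℕ) (hN : 0 < N) (H : Matrix (Fin N) (Fin N) ℂ) :
    Submodule ℝ (Matrix (Fin N) (Fin N) ℝ) where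
  carrier := { R |
    (∀ j : Fin N, j ≠ ⟨0, hN⟩ → R ⟨0, hN⟩ j = 0) ∧
    (∀ i : Fin N, R i ⟨0, hN⟩ = 0) ∧
    (∀ i j : Fin N, i < j →
      ∑ k : Fin N, H i k * (starRingEnd ℂ) (H j k) * (((R i k : ℝ) : ℂ) - ((R j k : ℝ) : ℂ)) = 0) }
  zero_mem' := by
    refine ⟨fun j _ => rfl, fun i => rfl, fun i j hij => ?_⟩
    simp
  add_mem' := by
    rintro R S ⟨hR1, hR2, hR3⟩ ⟨hS1, hS2, hS3⟩
    refine ⟨fun j hj => ?_, fun i => ?_, fun i j hij => ?_⟩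
    · simp [Matrix.add_apply, hR1 j hj, hS1 j hj]
    · simp [Matrix.add_apply, hR2 i, hS2 i]
    · have key : ∀ k : Fin N,
        H i k * (starRingEnd ℂ) (H j k) * ((((R + S) i k : ℝ) : ℂ) - (((R + S) j k : ℝ) : ℂ)) =
          H i k * (starRingEnd ℂ) (H j k) * (((R i k : ℝ) : ℂ) - ((R j k : ℝ) : ℂ)) +
          H i k * (starRingEnd ℂ) (H j k) * (((S i k : ℝ) : ℂ) - ((S j k : ℝ) : ℂ)) := by
        intro k
        simp only [Matrix.add_apply]
        push_cast
        ring
      rw [Finset.sum_congr rfl fun k _ => key k, Finset.sum_add_distrib,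
        hR3 i j hij, hS3 i j hij, add_zero]
  smul_mem' := by
    rintro c R ⟨hR1, hR2, hR3⟩
    refine ⟨fun j hj => ?_, fun i => ?_, fun i j hij => ?_⟩
    · simp [Matrix.smul_apply, hR1 j hj]
    · simp [Matrix.smul_apply, hR2 i]
    · have key : ∀ k : Fin N,
        H i k * (starRingEnd ℂ) (H j k) * ((((c • R) i k : ℝ) : ℂ) - (((c • R) j k : ℝ) : ℂ)) =
          (c : ℂ) * (H i k * (starRingEnd ℂ) (H j k) * (((R i k : ℝ) : ℂ) - ((R j k : ℝ) : ℂ))) := by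
        intro k
        simp only [Matrix.smul_apply, smul_eq_mul]
        push_cast
        ring
      rw [Finset.sum_congr rfl fun k _ => key k, ← Finset.mul_sum, hR3 i j hij, mul_zero]

/-- The defect of a complex Hadamard matrix: the dimension of `defectSpace`. -/
noncomputable def defect (N : ℕ) (hN : 0 < N) (H : Matrix (Fin N) (Fin N) ℂ) : ℕ :=
  Module.finrank ℝ (defectSpace N hN H)

/-- If a dephased complex Hadamard matrix `H` has defect `0`, then no
nontrivial affine Hadamard family stems from `H`: every real subspace `V` of matrices
with vanishing first row and column such that `H ∘ EXP(i·R)` is complex Hadamard for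
all `R ∈ V` is the zero subspace. -/
theorem no_affine_family_of_defect_zero (N : ℕ) (hN : 0 < N)
    (H : Matrix (Fin N) (Fin N) ℂ) (hH : IsComplexHadamard H)
    (hdeph : IsDephased H ⟨0, hN⟩) (hdef : defect N hN H = 0) :
    ∀ V : Submodule ℝ (Matrix (Fin N) (Fin N) ℝ),
      (∀ R ∈ V, (∀ j : Fin N, R ⟨0, hN⟩ j = 0) ∧ (∀ i : Fin N, R i ⟨0, hN⟩ = 0)) →
      (∀ R ∈ V, IsComplexHadamard
        (Matrix.of fun i j => H i j * Complex.exp (Complex.I * ((R i j : ℝ) : ℂ)))) →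
      V = ⊥ := by
  intro V hV0 hVH
  have hds : defectSpace N hN H = ⊥ := Submodule.finrank_eq_zero.mp hdef
  have hle : V ≤ defectSpace N hN H := by
    intro R hR
    refine ⟨fun j _ => (hV0 R hR).1 j, (hV0 R hR).2, fun i j hij => ?_⟩
    set c : Fin N → ℂ := fun k => H i k * (starRingEnd ℂ) (H j k) with hc
    set a : Fin N → ℝ := fun k => R i k - R j k with ha
    have hf : ∀ t : ℝ, ∑ k, c k * Complex.exp (Complex.I * ((t : ℂ) * (a k : ℂ))) = 0 := by
      intro t
      have htR : t • R ∈ V := V.smul_mem t hR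
      have hHad := (hVH (t • R) htR).2
      have hne : i ≠ j := ne_of_lt hij
      have hentry := congrFun (congrFun hHad i) j
      rw [Matrix.mul_apply] at hentry
      simp only [Matrix.conjTranspose_apply, Matrix.of_apply, Matrix.smul_apply,
        Matrix.smul_apply, smul_eq_mul, Matrix.one_apply_ne hne,
        smul_zero, mul_zero, Matrix.smul_apply] at hentry
      rw [← hentry]
      apply Finset.sum_congr rfl
      intro k _
      have he : Complex.exp (Complex.I * ((t:ℂ) * ((a k : ℝ):ℂ)))
          = Complex.exp (Complex.I * ((t * R i k : ℝ):ℂ)) *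
            Complex.exp (-(Complex.I * ((t * R j k : ℝ):ℂ))) := by
        rw [← Complex.exp_add]
        congr 1
        simp only [ha]
        push_cast
        ring
      have hstar : star (Complex.exp (Complex.I * ((t * R j k : ℝ):ℂ)))
          = Complex.exp (-(Complex.I * ((t * R j k : ℝ):ℂ))) := by
        rw [Complex.star_def, ← Complex.exp_conj]
        congr 1
        simp [Complex.conj_ofReal]
      simp only [hc, star_mul', hstar, Complex.star_def]
      rw [he]
      ring
    have hderiv : HasDerivAt
        (fun t : ℝ => ∑ k, c k * Complex.exp (Complex.I * ((t : ℂ) * (a k : ℂ))))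
        (∑ k, c k * (Complex.I * (a k : ℂ))) 0 := by
      apply HasDerivAt.fun_sum
      intro k _
      have h1 : HasDerivAt (fun s : ℂ => c k * Complex.exp (Complex.I * (s * (a k : ℂ))))
          (c k * (Complex.I * (a k : ℂ)) * Complex.exp (Complex.I * ((0 : ℂ) * (a k : ℂ))))
          ((0 : ℝ) : ℂ) := by
        have h2 : HasDerivAt (fun s : ℂ => Complex.I * (s * (a k : ℂ)))
            (Complex.I * (a k : ℂ)) ((0 : ℝ) : ℂ) := by
          simpa using ((hasDerivAt_id ((0:ℝ):ℂ)).mul_const ((a k : ℝ) : ℂ)).const_mul Complex.I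
        simpa [mul_comm, mul_assoc, mul_left_comm] using (h2.cexp.const_mul (c k))
      have := h1.comp_ofReal
      simpa using this
    have hzero : (∑ k, c k * (Complex.I * (a k : ℂ))) = 0 := by
      have heq : (fun t : ℝ => ∑ k, c k * Complex.exp (Complex.I * ((t : ℂ) * (a k : ℂ))))
          = fun _ => (0 : ℂ) := funext hf
      rw [heq] at hderiv
      exact hderiv.unique (hasDerivAt_const 0 0)
    have hI : (∑ k, c k * ((a k : ℂ))) = 0 := by
      have : Complex.I * (∑ k, c k * ((a k : ℂ))) = 0 := by
        rw [Finset.mul_sum, ← hzero]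
        exact Finset.sum_congr rfl fun k _ => by ring
      exact (mul_eq_zero.mp this).resolve_left Complex.I_ne_zero
    rw [← hI]
    apply Finset.sum_congr rfl
    intro k _
    simp only [hc, ha]
    push_cast
    ring
  rw [hds] at hle
  exact le_bot_iff.mp hle
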